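/- Let Π₊, Π₋, Π be three symmetric bilinear forms on a 2-dimensional real vector space that are pairwise apolar (orthogonal for the discriminant form) and all nonzero. If none of them is degenerate, then exactly one of them is definite and the other two are indefinite. If one of them has rank 1, say equal to ±ℓ² for a nonzero linear form ℓ, then the other two are divisible by ℓ and at least one of them is proportional to ℓ². -/

import Mathlib

section

variable {T : Type} [AddCommGroup T] [Module ℝ T]

/-- Apolarity (orthogonality for the discriminant form) of two symmetric bilinear forms. -/
def IsApolar (B B' : T →ₗ[ℝ] T →ₗ[ℝ] ℝ) : Prop :=
  ∀ X Y : T, B X X * B' Y Y + B Y Y * B' X X = 2 * (B X Y * B' X Y)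

/-- A definite form: `B(x,x)` has a fixed sign on nonzero vectors. -/
def IsDefinite (B : T →ₗ[ℝ] T →ₗ[ℝ] ℝ) : Prop :=
  (∀ x : T, x ≠ 0 → 0 < B x x) ∨ (∀ x : T, x ≠ 0 → B x x < 0)

/-- An indefinite form: `B(x,x)` takes both signs. -/
def IsIndefinite (B : T →ₗ[ℝ] T →ₗ[ℝ] ℝ) : Prop :=
  (∃ x : T, 0 < B x x) ∧ (∃ y : T, B y y < 0)

/-- Nondegeneracy. -/
def IsNondeg (B : T →ₗ[ℝ] T →ₗ[ℝ] ℝ) : Prop :=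
  ∀ x : T, (∀ y : T, B x y = 0) → x = 0

/-- `B = ±ℓ²` for the linear form `ℓ`. -/
def IsPMSquare (ℓ : T →ₗ[ℝ] ℝ) (B : T →ₗ[ℝ] T →ₗ[ℝ] ℝ) : Prop :=
  (∀ x y : T, B x y = ℓ x * ℓ y) ∨ (∀ x y : T, B x y = -(ℓ x * ℓ y))

/-- `B` is divisible by the linear form `ℓ`. -/
def IsDivisibleBy (ℓ : T →ₗ[ℝ] ℝ) (B : T →ₗ[ℝ] T →ₗ[ℝ] ℝ) : Prop :=
  ∃ m : T →ₗ[ℝ] ℝ, ∀ x y : T, B x y = (ℓ x * m y + ℓ y * m x) / 2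

/-- `B` is proportional to `ℓ²`. -/
def IsProportionalToSquare (ℓ : T →ₗ[ℝ] ℝ) (B : T →ₗ[ℝ] T →ₗ[ℝ] ℝ) : Prop :=
  ∃ c : ℝ, ∀ x y : T, B x y = c * (ℓ x * ℓ y)

end

/-!
In a basis, the binary form `a u² + 2 b u v + c v²` is the point `(a, b, c)` of `ℝ³`; its
discriminant `a c - b²` is a quadratic form of signature `(1, 2)` there, and apolarity is
orthogonality for its polarization. Definite forms are the timelike points, indefinite ones the
spacelike points. Two timelike vectors are never orthogonal (reverse Cauchy–Schwarz), and three
pairwise orthogonal spacelike vectors are impossible because the Gram determinant gives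
`Δ₀ Δ₁ Δ₂ = det(M)² / 4 ≥ 0` for the matrix `M` of coefficients.

If `B = ±ℓ²`, apolarity with `B` forces a form to vanish on `ker ℓ`, so it is `ℓ m` for a linear
form `m`. Two forms `ℓ m₁`, `ℓ m₂` are apolar iff `(ℓ ∧ m₁) (ℓ ∧ m₂) = 0`, and in dimension 2
this makes one of `m₁`, `m₂` proportional to `ℓ`.
-/

open Module Matrix

noncomputable section

def discrPolar (p q : Fin 3 → ℝ) : ℝ := (p 0 * q 2 + q 0 * p 2) / 2 - p 1 * q 1

def discrPolarMatrix : Matrix (Fin 3) (Fin 3) ℝ := !![0, 0, 1 / 2; 0, -1, 0; 1 / 2, 0, 0]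

lemma discrPolar_self (p : Fin 3 → ℝ) : discrPolar p p = p 0 * p 2 - p 1 ^ 2 := by
  unfold discrPolar; ring

lemma discrPolar_ne_zero_of_pos {p q : Fin 3 → ℝ} (hp : 0 < discrPolar p p)
    (hq : 0 < discrPolar q q) : discrPolar p q ≠ 0 := by
  rw [discrPolar_self, sub_pos] at hp hq
  have hlt : p 1 ^ 2 * q 1 ^ 2 < p 0 * p 2 * (q 0 * q 2) :=
    mul_lt_mul'' hp hq (sq_nonneg _) (sq_nonneg _)
  intro h
  have hsq : (p 0 * q 2 + q 0 * p 2) ^ 2 = 4 * (p 1 ^ 2 * q 1 ^ 2) := by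
    rw [show p 0 * q 2 + q 0 * p 2 = 2 * (p 1 * q 1) by unfold discrPolar at h; linarith]
    ring
  nlinarith [sq_nonneg (p 0 * q 2 - q 0 * p 2)]

lemma mul_discrPolarMatrix_mul_transpose_apply (M : Matrix (Fin 3) (Fin 3) ℝ) (i j : Fin 3) :
    (M * discrPolarMatrix * Mᵀ) i j = discrPolar (M i) (M j) := by
  simp only [Matrix.mul_apply, Fin.sum_univ_three, transpose_apply, discrPolarMatrix, discrPolar,
    of_apply, cons_val', cons_val_fin_one, cons_val_zero, cons_val_one, cons_val]
  ring

lemma prod_discrPolar_self_nonneg (M : Matrix (Fin 3) (Fin 3) ℝ)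
    (horth : ∀ i j, i ≠ j → discrPolar (M i) (M j) = 0) :
    0 ≤ ∏ i, discrPolar (M i) (M i) := by
  have hgram : M * discrPolarMatrix * Mᵀ = Matrix.diagonal fun i ↦ discrPolar (M i) (M i) := by
    ext i j
    rw [mul_discrPolarMatrix_mul_transpose_apply, Matrix.diagonal_apply]
    split_ifs with hij
    · rw [hij]
    · exact horth i j hij
  have hdet : discrPolarMatrix.det = 1 / 4 := by
    simp [Matrix.det_fin_three, discrPolarMatrix]
    norm_num
  rw [← Matrix.det_diagonal, ← hgram, Matrix.det_mul, Matrix.det_mul, Matrix.det_transpose, hdet]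
  nlinarith [mul_self_nonneg M.det]

lemma exists_discrPolar_pos_of_pairwise_orthogonal (M : Matrix (Fin 3) (Fin 3) ℝ)
    (horth : ∀ i j, i ≠ j → discrPolar (M i) (M j) = 0)
    (hne : ∀ i, discrPolar (M i) (M i) ≠ 0) :
    ∃ i, 0 < discrPolar (M i) (M i) ∧ ∀ j, j ≠ i → discrPolar (M j) (M j) < 0 := by
  obtain ⟨i, hi⟩ : ∃ i, 0 < discrPolar (M i) (M i) := by
    by_contra! hle
    have hneg i : discrPolar (M i) (M i) < 0 := (hle i).lt_of_ne (hne i)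
    have := prod_discrPolar_self_nonneg M horth
    rw [Fin.prod_univ_three] at this
    nlinarith [mul_pos_of_neg_of_neg (hneg 0) (hneg 1), hneg 2]
  refine ⟨i, hi, fun j hji ↦ lt_of_not_ge fun hj ↦ ?_⟩
  exact discrPolar_ne_zero_of_pos hi (hj.lt_of_ne' (hne j)) (horth i j hji.symm)

def binaryQuad (p : Fin 3 → ℝ) (u v : ℝ) : ℝ := p 0 * u ^ 2 + 2 * p 1 * u * v + p 2 * v ^ 2

lemma binaryQuad_neg (p : Fin 3 → ℝ) (u v : ℝ) : binaryQuad (-p) u v = -binaryQuad p u v := by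
  simp only [binaryQuad, Pi.neg_apply]; ring

lemma discrPolar_neg_self (p : Fin 3 → ℝ) : discrPolar (-p) (-p) = discrPolar p p := by
  simp only [discrPolar, Pi.neg_apply]; ring

lemma binaryQuad_pos {p : Fin 3 → ℝ} (hd : 0 < discrPolar p p) (hp : 0 < p 0) {u v : ℝ}
    (huv : u ≠ 0 ∨ v ≠ 0) : 0 < binaryQuad p u v := by
  rw [discrPolar_self] at hd
  unfold binaryQuad
  rcases eq_or_ne v 0 with rfl | hv
  · have hu : u ≠ 0 := huv.resolve_right (not_not.mpr rfl)
    have hu2 : 0 < u ^ 2 := by positivity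
    simpa using mul_pos hp hu2
  · -- `p 0 * binaryQuad p u v = (p 0 * u + p 1 * v) ^ 2 + (p 0 * p 2 - p 1 ^ 2) * v ^ 2`
    have hv2 : 0 < v ^ 2 := by positivity
    nlinarith [sq_nonneg (p 0 * u + p 1 * v), mul_pos hd hv2]

lemma exists_binaryQuad_pos {p : Fin 3 → ℝ} (hd : discrPolar p p < 0) :
    ∃ u v, 0 < binaryQuad p u v := by
  rw [discrPolar_self] at hd
  unfold binaryQuad
  rcases lt_trichotomy (p 0) 0 with ha | ha | ha
  · exact ⟨p 1, -p 0, by nlinarith⟩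
  · have hb : p 1 ≠ 0 := by rintro hb; rw [ha, hb] at hd; norm_num at hd
    refine ⟨(1 - p 2) / (2 * p 1), 1, ?_⟩
    have hval : 0 * ((1 - p 2) / (2 * p 1)) ^ 2 + 2 * p 1 * ((1 - p 2) / (2 * p 1)) * 1
        + p 2 * 1 ^ 2 = 1 := by
      field_simp
      ring
    rw [ha, hval]
    exact one_pos
  · exact ⟨1, 0, by simpa using ha⟩

section BinaryForm

variable {T : Type} [AddCommGroup T] [Module ℝ T]

def binaryCoeffs (e : Basis (Fin 2) ℝ T) (B : T →ₗ[ℝ] T →ₗ[ℝ] ℝ) : Fin 3 → ℝ :=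
  ![B (e 0) (e 0), B (e 0) (e 1), B (e 1) (e 1)]

lemma apply_smul_add_smul_self {B : T →ₗ[ℝ] T →ₗ[ℝ] ℝ} (hB : ∀ x y, B x y = B y x)
    (x y : T) (u v : ℝ) :
    B (u • x + v • y) (u • x + v • y) = B x x * u ^ 2 + 2 * B x y * u * v + B y y * v ^ 2 := by
  simp only [map_add, map_smul, LinearMap.add_apply, LinearMap.smul_apply, smul_eq_mul, hB y x]
  ring

lemma Module.Basis.eq_repr_smul_add_repr_smul (e : Basis (Fin 2) ℝ T) (x : T) :
    x = e.repr x 0 • e 0 + e.repr x 1 • e 1 := by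
  simpa only [Fin.sum_univ_two] using (e.sum_repr x).symm

lemma apply_self_eq_binaryQuad (e : Basis (Fin 2) ℝ T) {B : T →ₗ[ℝ] T →ₗ[ℝ] ℝ}
    (hB : ∀ x y, B x y = B y x) (x : T) :
    B x x = binaryQuad (binaryCoeffs e B) (e.repr x 0) (e.repr x 1) := by
  conv_lhs => rw [e.eq_repr_smul_add_repr_smul x, apply_smul_add_smul_self hB]
  rfl

lemma binaryQuad_binaryCoeffs (e : Basis (Fin 2) ℝ T) {B : T →ₗ[ℝ] T →ₗ[ℝ] ℝ}
    (hB : ∀ x y, B x y = B y x) (u v : ℝ) :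
    binaryQuad (binaryCoeffs e B) u v = B (u • e 0 + v • e 1) (u • e 0 + v • e 1) := by
  rw [apply_smul_add_smul_self hB]
  rfl

lemma isDefinite_of_discrPolar_pos (e : Basis (Fin 2) ℝ T) {B : T →ₗ[ℝ] T →ₗ[ℝ] ℝ}
    (hB : ∀ x y, B x y = B y x) (hd : 0 < discrPolar (binaryCoeffs e B) (binaryCoeffs e B)) :
    IsDefinite B := by
  have hcoord {x : T} (hx : x ≠ 0) : e.repr x 0 ≠ 0 ∨ e.repr x 1 ≠ 0 := by
    by_contra! h
    exact hx (by rw [e.eq_repr_smul_add_repr_smul x, h.1, h.2, zero_smul, zero_smul, add_zero])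
  have ha : binaryCoeffs e B 0 ≠ 0 := by
    rintro ha
    rw [discrPolar_self, ha, zero_mul, zero_sub] at hd
    nlinarith [sq_nonneg (binaryCoeffs e B 1)]
  simp only [IsDefinite, apply_self_eq_binaryQuad e hB]
  rcases ha.lt_or_gt with ha | ha
  · refine .inr fun x hx ↦ neg_pos.mp ?_
    rw [← binaryQuad_neg]
    exact binaryQuad_pos (by rwa [discrPolar_neg_self]) (by simpa using ha) (hcoord hx)
  · exact .inl fun x hx ↦ binaryQuad_pos hd ha (hcoord hx)

lemma isIndefinite_of_discrPolar_neg (e : Basis (Fin 2) ℝ T) {B : T →ₗ[ℝ] T →ₗ[ℝ] ℝ}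
    (hB : ∀ x y, B x y = B y x) (hd : discrPolar (binaryCoeffs e B) (binaryCoeffs e B) < 0) :
    IsIndefinite B := by
  obtain ⟨u, v, hpos⟩ := exists_binaryQuad_pos hd
  obtain ⟨u', v', hneg⟩ := exists_binaryQuad_pos (p := -binaryCoeffs e B)
    (by rwa [discrPolar_neg_self])
  rw [binaryQuad_neg, neg_pos, binaryQuad_binaryCoeffs e hB] at hneg
  rw [binaryQuad_binaryCoeffs e hB] at hpos
  exact ⟨⟨_, hpos⟩, ⟨_, hneg⟩⟩

lemma discrPolar_binaryCoeffs_ne_zero (e : Basis (Fin 2) ℝ T) {B : T →ₗ[ℝ] T →ₗ[ℝ] ℝ}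
    (hB : ∀ x y, B x y = B y x) (hnd : IsNondeg B) :
    discrPolar (binaryCoeffs e B) (binaryCoeffs e B) ≠ 0 := by
  have hdet := (LinearMap.separatingLeft_iff_det_ne_zero e).mp hnd
  rw [det_fin_two] at hdet
  simpa [discrPolar_self, binaryCoeffs, LinearMap.toMatrix₂_apply, hB (e 1) (e 0), sq] using hdet

lemma IsApolar.discrPolar_binaryCoeffs_eq_zero (e : Basis (Fin 2) ℝ T)
    {B B' : T →ₗ[ℝ] T →ₗ[ℝ] ℝ} (h : IsApolar B B') :
    discrPolar (binaryCoeffs e B) (binaryCoeffs e B') = 0 := by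
  have := h (e 0) (e 1)
  simp only [discrPolar, binaryCoeffs, Matrix.cons_val]
  linarith

lemma IsApolar.apply_self_eq_zero_of_isPMSquare {ℓ : T →ₗ[ℝ] ℝ} (hℓ : ℓ ≠ 0)
    {B B' : T →ₗ[ℝ] T →ₗ[ℝ] ℝ} (hB : IsPMSquare ℓ B) (h : IsApolar B' B) {z : T}
    (hz : ℓ z = 0) : B' z z = 0 := by
  obtain ⟨v, hv⟩ := LinearMap.surjective_of_ne_zero hℓ 1
  have := h v z
  rcases hB with hB | hB <;> simp only [hB, hv, hz, mul_zero, mul_one, neg_zero] at this <;> linarith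

lemma isDivisibleBy_of_apply_self_eq_zero {ℓ : T →ₗ[ℝ] ℝ} (hℓ : ℓ ≠ 0)
    {B : T →ₗ[ℝ] T →ₗ[ℝ] ℝ} (hB : ∀ x y, B x y = B y x)
    (hker : ∀ z, ℓ z = 0 → B z z = 0) : IsDivisibleBy ℓ B := by
  have hker₂ {z w : T} (hz : ℓ z = 0) (hw : ℓ w = 0) : B z w = 0 := by
    have hzw := hker (z + w) (by rw [map_add, hz, hw, add_zero])
    simp only [map_add, LinearMap.add_apply, hker z hz, hker w hw, hB w z] at hzw
    linarith
  obtain ⟨v, hv⟩ := LinearMap.surjective_of_ne_zero hℓ 1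
  have hproj (x : T) : ℓ (x - ℓ x • v) = 0 := by simp [hv]
  refine ⟨2 • B v - B v v • ℓ, fun x y ↦ ?_⟩
  -- split `x = (x - ℓ x • v) + ℓ x • v` and `y` likewise; the part in `ker ℓ × ker ℓ` vanishes
  have hxy : B x y = B (x - ℓ x • v) (y - ℓ y • v) + ℓ x * B v (y - ℓ y • v)
      + ℓ y * B v (x - ℓ x • v) + ℓ x * ℓ y * B v v := by
    simp only [map_sub, map_smul, LinearMap.sub_apply, LinearMap.smul_apply, smul_eq_mul,
      hB x v]
    ring
  rw [hxy, hker₂ (hproj x) (hproj y)]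
  simp only [map_sub, map_smul, LinearMap.sub_apply, LinearMap.smul_apply, smul_eq_mul]
  ring

lemma apply_mul_apply_sub_apply_mul_apply (e : Basis (Fin 2) ℝ T) (f g : T →ₗ[ℝ] ℝ) (x y : T) :
    f x * g y - f y * g x = (e.repr x 0 * e.repr y 1 - e.repr x 1 * e.repr y 0)
      * (f (e 0) * g (e 1) - f (e 1) * g (e 0)) := by
  conv_lhs => rw [e.eq_repr_smul_add_repr_smul x, e.eq_repr_smul_add_repr_smul y]
  simp only [map_add, map_smul, smul_eq_mul]
  ring

lemma IsDivisibleBy.isProportionalToSquare_of_apply_mul_apply_comm {ℓ m : T →ₗ[ℝ] ℝ}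
    (hℓ : ℓ ≠ 0) {B : T →ₗ[ℝ] T →ₗ[ℝ] ℝ} (hB : ∀ x y, B x y = (ℓ x * m y + ℓ y * m x) / 2)
    (hm : ∀ x y, ℓ x * m y = ℓ y * m x) : IsProportionalToSquare ℓ B := by
  obtain ⟨v, hv⟩ := LinearMap.surjective_of_ne_zero hℓ 1
  have hmℓ (y : T) : m y = m v * ℓ y := by simpa [hv, mul_comm] using hm v y
  exact ⟨m v, fun x y ↦ by rw [hB, hmℓ x, hmℓ y]; ring⟩

lemma IsApolar.isProportionalToSquare_or (e : Basis (Fin 2) ℝ T) {ℓ : T →ₗ[ℝ] ℝ} (hℓ : ℓ ≠ 0)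
    {B₁ B₂ : T →ₗ[ℝ] T →ₗ[ℝ] ℝ} (h₁ : IsDivisibleBy ℓ B₁) (h₂ : IsDivisibleBy ℓ B₂)
    (h : IsApolar B₁ B₂) : IsProportionalToSquare ℓ B₁ ∨ IsProportionalToSquare ℓ B₂ := by
  obtain ⟨m₁, hm₁⟩ := h₁
  obtain ⟨m₂, hm₂⟩ := h₂
  -- apolarity of `ℓ m₁` and `ℓ m₂` says that the product of the wedges `ℓ ∧ m₁` and `ℓ ∧ m₂` is 0
  have hprod : (ℓ (e 0) * m₁ (e 1) - ℓ (e 1) * m₁ (e 0))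
      * (ℓ (e 0) * m₂ (e 1) - ℓ (e 1) * m₂ (e 0)) = 0 := by
    have := h (e 0) (e 1)
    rw [hm₁, hm₁, hm₁, hm₂, hm₂, hm₂] at this
    linear_combination (-2) * this
  have hcomm {m : T →ₗ[ℝ] ℝ} (hm : ℓ (e 0) * m (e 1) - ℓ (e 1) * m (e 0) = 0) (x y : T) :
      ℓ x * m y = ℓ y * m x := by
    have := apply_mul_apply_sub_apply_mul_apply e ℓ m x y
    rw [hm, mul_zero] at this
    linarith
  rcases mul_eq_zero.mp hprod with h0 | h0
  · exact .inl (IsDivisibleBy.isProportionalToSquare_of_apply_mul_apply_comm hℓ hm₁ (hcomm h0))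
  · exact .inr (IsDivisibleBy.isProportionalToSquare_of_apply_mul_apply_comm hℓ hm₂ (hcomm h0))

end BinaryForm

end

theorem darboux_stmt18_general
    (T : Type) [AddCommGroup T] [Module ℝ T] (hdim : Module.finrank ℝ T = 2)
    (B : Fin 3 → (T →ₗ[ℝ] T →ₗ[ℝ] ℝ))
    (hsym : ∀ i, ∀ X Y : T, B i X Y = B i Y X)
    (hapolar : ∀ i j, i ≠ j → IsApolar (B i) (B j)) :
    ((∀ i, IsNondeg (B i)) →
      ∃ i, IsDefinite (B i) ∧ ∀ j, j ≠ i → IsIndefinite (B j)) ∧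
    (∀ (i : Fin 3) (ℓ : T →ₗ[ℝ] ℝ), ℓ ≠ 0 → IsPMSquare ℓ (B i) →
      (∀ j, j ≠ i → IsDivisibleBy ℓ (B j)) ∧
      ∃ j, j ≠ i ∧ IsProportionalToSquare ℓ (B j)) := by
  have : Module.Finite ℝ T := Module.finite_of_finrank_eq_succ hdim
  let e : Basis (Fin 2) ℝ T := Module.finBasisOfFinrankEq ℝ T hdim
  refine ⟨fun hnd ↦ ?_, fun i ℓ hℓ hsq ↦ ?_⟩
  · obtain ⟨i, hi, hj⟩ := exists_discrPolar_pos_of_pairwise_orthogonal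
      (Matrix.of fun i ↦ binaryCoeffs e (B i))
      (fun i j hij ↦ (hapolar i j hij).discrPolar_binaryCoeffs_eq_zero e)
      (fun i ↦ discrPolar_binaryCoeffs_ne_zero e (hsym i) (hnd i))
    exact ⟨i, isDefinite_of_discrPolar_pos e (hsym i) hi,
      fun j hji ↦ isIndefinite_of_discrPolar_neg e (hsym j) (hj j hji)⟩
  · have hdiv (j : Fin 3) (hji : j ≠ i) : IsDivisibleBy ℓ (B j) :=
      isDivisibleBy_of_apply_self_eq_zero hℓ (hsym j)
        fun _ hz ↦ (hapolar j i hji).apply_self_eq_zero_of_isPMSquare hℓ hsq hz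
    have hothers : ∀ k : Fin 3, k + 1 ≠ k ∧ k + 2 ≠ k ∧ k + 1 ≠ k + 2 := by decide
    obtain ⟨h₁, h₂, h₁₂⟩ := hothers i
    refine ⟨hdiv, ?_⟩
    rcases (hapolar _ _ h₁₂).isProportionalToSquare_or e hℓ (hdiv _ h₁) (hdiv _ h₂) with h | h
    · exact ⟨_, h₁, h⟩
    · exact ⟨_, h₂, h⟩

/-- three pairwise apolar nonzero symmetric bilinear forms on a
2-dimensional real vector space: if all are nondegenerate then exactly one is definite and
the other two are indefinite; if one of them equals `±ℓ²` with `ℓ ≠ 0`, then the other two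
are divisible by `ℓ` and at least one of them is proportional to `ℓ²`. -/
theorem darboux_stmt18
    (T : Type) [AddCommGroup T] [Module ℝ T] (hdim : Module.finrank ℝ T = 2)
    (B : Fin 3 → (T →ₗ[ℝ] T →ₗ[ℝ] ℝ))
    (hsym : ∀ i, ∀ X Y : T, B i X Y = B i Y X)
    (hne : ∀ i, B i ≠ 0)
    (hapolar : ∀ i j, i ≠ j → IsApolar (B i) (B j)) :
    ((∀ i, IsNondeg (B i)) →
      ∃ i, IsDefinite (B i) ∧ ∀ j, j ≠ i → IsIndefinite (B j)) ∧
    (∀ (i : Fin 3) (ℓ : T →ₗ[ℝ] ℝ), ℓ ≠ 0 → IsPMSquare ℓ (B i) →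
      (∀ j, j ≠ i → IsDivisibleBy ℓ (B j)) ∧
      ∃ j, j ≠ i ∧ IsProportionalToSquare ℓ (B j)) :=
  darboux_stmt18_general T hdim B hsym hapolar
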